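/- arXiv:2403.05492 — 4 statements merged into one kernel-verified Lean document; each statement's English description precedes it below -/
import Mathlib

section
/- Let F = (x₁² + ⋯ + xₙ²)^s with n ≥ 2, s ≥ 1, and R = ℂ[∂₁,…,∂ₙ]. Then the operator (∂₁² + ⋯ + ∂ₙ²)^{s+1} annihilates F, while (∂₁² + ⋯ + ∂ₙ²)^s does not; consequently ∂₁^{2s} does not annihilate F and the algebra R/Ann_R(F) has socle degree exactly 2s. -/
/-!
For `d ≤ e` the operator `∂^d` sends `x^e` to `e!/(e-d)! · x^(e-d)`; otherwise it kills `x^e`.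
Hence if `P` and `F` are homogeneous with `deg F ≤ deg P`, only the exponents `d = e` survive and
`P(∂) F = ∑_d P_d F_d d!` is a constant; it vanishes when `deg F < deg P`. For
`F = (x₁² + ⋯ + xₙ²)^s` the coefficients are natural numbers, so `F(∂) F` is a sum of
nonnegative terms, not all zero, and `∂₁^(2s) F = (2s)! · [x₁^(2s)] F` with `[x₁^(2s)] F ≥ 1`.
-/

open MvPolynomial

/-- The apolarity action: `P`, viewed as a constant-coefficient differential operator,
applied to the polynomial `F`. -/
noncomputable def apolar {σ : Type*} [DecidableEq σ] (P F : MvPolynomial σ ℂ) :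
    MvPolynomial σ ℂ :=
  ∑ d ∈ P.support, ∑ e ∈ F.support,
    monomial (e - d)
      (P.coeff d * F.coeff e * ∏ i ∈ d.support ∪ e.support, ((e i).descFactorial (d i) : ℂ))

/-- The annihilator `Ann_R(F) = {P : P(∂)F = 0}` as a set. -/
def annSet {σ : Type*} [DecidableEq σ] (F : MvPolynomial σ ℂ) : Set (MvPolynomial σ ℂ) :=
  {P | apolar P F = 0}

/-- The degree-`i` graded piece of the quotient `R ⧸ I`: the image of the homogeneous
degree-`i` polynomials. -/
noncomputable def quotDeg {σ : Type*} (I : Ideal (MvPolynomial σ ℂ)) (i : ℕ) :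
    Submodule ℂ (MvPolynomial σ ℂ ⧸ I) :=
  (homogeneousSubmodule σ ℂ i).map (Ideal.Quotient.mkₐ ℂ I).toLinearMap

/-- `×L^(c-2i) : A_i → A_(c-i)` is bijective, for `A = R ⧸ I`. -/
def lefschetzAt {σ : Type*} (I : Ideal (MvPolynomial σ ℂ)) (c : ℕ) (L : MvPolynomial σ ℂ)
    (i : ℕ) : Prop :=
  (∀ x ∈ quotDeg I i, Ideal.Quotient.mk I L ^ (c - 2 * i) * x = 0 → x = 0) ∧
  (∀ y ∈ quotDeg I (c - i), ∃ x ∈ quotDeg I i, Ideal.Quotient.mk I L ^ (c - 2 * i) * x = y)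

namespace Finsupp

variable {σ : Type*}

lemma eq_of_le_of_degree_le {d e : σ →₀ ℕ} (h : d ≤ e) (hdeg : e.degree ≤ d.degree) :
    d = e := by
  obtain ⟨c, rfl⟩ := exists_add_of_le h
  have hc : c.degree = 0 := by
    rw [map_add] at hdeg
    omega
  rw [(degree_eq_zero_iff c).1 hc, add_zero]

end Finsupp

section Apolar

variable {σ : Type*} [DecidableEq σ]

lemma apolar_term_eq_zero_of_not_le {d e : σ →₀ ℕ} (h : ¬ d ≤ e) (a b : ℂ) :
    monomial (e - d) (a * b * ∏ i ∈ d.support ∪ e.support, ((e i).descFactorial (d i) : ℂ))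
      = 0 := by
  obtain ⟨j, hj⟩ : ∃ j, e j < d j := by simpa [Finsupp.le_def] using h
  have hj' : j ∈ d.support ∪ e.support :=
    Finset.mem_union_left _ (Finsupp.mem_support_iff.2 (by omega))
  rw [Finset.prod_eq_zero hj' (by simp [Nat.descFactorial_eq_zero_iff_lt.2 hj]), mul_zero,
    monomial_zero]

lemma apolar_eq_C_of_isHomogeneous {P F : MvPolynomial σ ℂ} {p f : ℕ}
    (hP : P.IsHomogeneous p) (hF : F.IsHomogeneous f) (hfp : f ≤ p) :
    apolar P F =
      C (∑ d ∈ P.support, P.coeff d * F.coeff d * ∏ j ∈ d.support, ((d j).factorial : ℂ)) := by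
  rw [apolar, C_apply, map_sum]
  refine Finset.sum_congr rfl fun d hd => ?_
  have hne : ∀ e ∈ F.support, e ≠ d → ¬ d ≤ e := fun e he hed hde => by
    refine hed (Finsupp.eq_of_le_of_degree_le hde ?_).symm
    rw [Finsupp.degree_apply, Finsupp.degree_apply, ← hF.degree_eq_sum_deg_support he,
      ← hP.degree_eq_sum_deg_support hd]
    exact hfp
  rw [Finset.sum_eq_single d (fun e he hed => apolar_term_eq_zero_of_not_le (hne e he hed) _ _)
    (fun hdF => by simp [notMem_support_iff.1 hdF])]
  simp [Nat.descFactorial_self]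

lemma apolar_eq_zero_of_isHomogeneous_of_lt {P F : MvPolynomial σ ℂ} {p f : ℕ}
    (hP : P.IsHomogeneous p) (hF : F.IsHomogeneous f) (hfp : f < p) : apolar P F = 0 := by
  rw [apolar_eq_C_of_isHomogeneous hP hF hfp.le, C_eq_zero]
  refine Finset.sum_eq_zero fun d hd => ?_
  have hdeg : d.degree ≠ f := by
    rw [Finsupp.degree_apply, ← hP.degree_eq_sum_deg_support hd]
    exact hfp.ne'
  rw [hF.coeff_eq_zero hdeg, mul_zero, zero_mul]

lemma apolar_X_pow_of_isHomogeneous {F : MvPolynomial σ ℂ} {k : ℕ} (hF : F.IsHomogeneous k)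
    (i : σ) : apolar (X i ^ k) F = C (F.coeff (Finsupp.single i k) * (k.factorial : ℂ)) := by
  rw [apolar_eq_C_of_isHomogeneous (isHomogeneous_X_pow i k) hF le_rfl, support_X_pow,
    Finset.sum_singleton, coeff_X_pow, if_pos rfl, one_mul]
  congr 2
  exact Finsupp.prod_single_index (h := fun _ (m : ℕ) => (m.factorial : ℂ)) (by simp)

lemma apolar_map_natCast_self_ne_zero {G : MvPolynomial σ ℕ} {k : ℕ} (hG : G.IsHomogeneous k)
    (hG0 : G ≠ 0) : apolar (map (Nat.castRingHom ℂ) G) (map (Nat.castRingHom ℂ) G) ≠ 0 := by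
  have hF := hG.map (Nat.castRingHom ℂ)
  rw [apolar_eq_C_of_isHomogeneous hF hF le_rfl, Ne, C_eq_zero,
    support_map_of_injective _ Nat.cast_injective]
  simp only [coeff_map, eq_natCast]
  norm_cast
  obtain ⟨d, hd⟩ := ne_zero_iff.1 hG0
  refine fun hsum => mul_ne_zero (mul_ne_zero hd hd) ?_ (Finset.sum_eq_zero_iff.1 hsum d
    (mem_support_iff.2 hd))
  exact Finset.prod_ne_zero_iff.2 fun j _ => Nat.factorial_ne_zero _

end Apolar

section Socle

variable {σ : Type*} {I : Ideal (MvPolynomial σ ℂ)}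

lemma quotDeg_eq_bot_of_lt [DecidableEq σ] {F : MvPolynomial σ ℂ}
    (hI : (I : Set (MvPolynomial σ ℂ)) = annSet F) {k i : ℕ}
    (hF : F.IsHomogeneous k) (hki : k < i) : quotDeg I i = ⊥ := by
  rw [eq_bot_iff]
  rintro _ ⟨P, hP, rfl⟩
  rw [Submodule.mem_bot]
  refine Ideal.Quotient.eq_zero_iff_mem.2 ?_
  rw [← SetLike.mem_coe, hI]
  exact apolar_eq_zero_of_isHomogeneous_of_lt ((mem_homogeneousSubmodule _ _).1 hP) hF hki

lemma quotDeg_ne_bot {P : MvPolynomial σ ℂ} {i : ℕ} (hP : P.IsHomogeneous i) (hPI : P ∉ I) :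
    quotDeg I i ≠ ⊥ := by
  intro hbot
  have hmem : (Ideal.Quotient.mkₐ ℂ I).toLinearMap P ∈ quotDeg I i :=
    Submodule.mem_map_of_mem ((mem_homogeneousSubmodule _ _).2 hP)
  rw [hbot, Submodule.mem_bot] at hmem
  exact hPI (Ideal.Quotient.eq_zero_iff_mem.1 hmem)

end Socle

section Coeff

variable {σ R : Type*} [CommSemiring R] [PartialOrder R] [IsOrderedRing R]
  [CanonicallyOrderedAdd R]

lemma coeff_mul_coeff_le_coeff_add (P Q : MvPolynomial σ R) (d e : σ →₀ ℕ) :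
    P.coeff d * Q.coeff e ≤ (P * Q).coeff (d + e) := by
  classical
  rw [coeff_mul]
  exact Finset.single_le_sum (s := Finset.HasAntidiagonal.antidiagonal (d + e)) (a := (d, e))
    (f := fun x => P.coeff x.1 * Q.coeff x.2) (fun _ _ => zero_le) (by simp)

lemma coeff_pow_le_coeff_nsmul (P : MvPolynomial σ R) (d : σ →₀ ℕ) (k : ℕ) :
    P.coeff d ^ k ≤ (P ^ k).coeff (k • d) := by
  induction k with
  | zero => simp
  | succ k ih =>
    rw [pow_succ, pow_succ, succ_nsmul]
    exact (mul_le_mul_left ih _).trans (coeff_mul_coeff_le_coeff_add _ _ _ _)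

end Coeff

section SumOfSquares

variable {σ R : Type*} [Fintype σ]

lemma isHomogeneous_sum_X_sq_pow [CommSemiring R] (s : ℕ) :
    ((∑ i : σ, X i ^ 2 : MvPolynomial σ R) ^ s).IsHomogeneous (2 * s) :=
  (IsHomogeneous.sum _ _ _ fun i _ => isHomogeneous_X_pow i 2).pow s

lemma coeff_single_sum_X_sq [CommSemiring R] [DecidableEq σ] (i : σ) :
    (∑ j : σ, X j ^ 2 : MvPolynomial σ R).coeff (Finsupp.single i 2) = 1 := by
  simp [coeff_sum, coeff_X_pow, Finsupp.single_left_inj two_ne_zero]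

lemma one_le_coeff_sum_X_sq_pow [CommSemiring R] [PartialOrder R] [IsOrderedRing R]
    [CanonicallyOrderedAdd R] (i : σ) (s : ℕ) :
    1 ≤ ((∑ j : σ, X j ^ 2 : MvPolynomial σ R) ^ s).coeff (Finsupp.single i (2 * s)) := by
  classical
  have h :=
    coeff_pow_le_coeff_nsmul (∑ j : σ, X j ^ 2 : MvPolynomial σ R) (Finsupp.single i 2) s
  rwa [coeff_single_sum_X_sq, one_pow, Finsupp.smul_single, smul_eq_mul, mul_comm] at h

end SumOfSquares

theorem stmt4 (n s : ℕ) (hn : 2 ≤ n)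
    (I : Ideal (MvPolynomial (Fin n) ℂ))
    (hI : (I : Set (MvPolynomial (Fin n) ℂ)) = annSet ((∑ i, X i ^ 2) ^ s)) :
    apolar ((∑ i : Fin n, X i ^ 2) ^ (s + 1)) ((∑ i : Fin n, X i ^ 2) ^ s) = 0 ∧
    apolar ((∑ i : Fin n, X i ^ 2) ^ s) ((∑ i : Fin n, X i ^ 2) ^ s) ≠ 0 ∧
    apolar ((X (⟨0, by omega⟩ : Fin n) : MvPolynomial (Fin n) ℂ) ^ (2 * s))
      ((∑ i : Fin n, X i ^ 2) ^ s) ≠ 0 ∧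
    quotDeg I (2 * s) ≠ ⊥ ∧
    ∀ i, 2 * s < i → quotDeg I i = ⊥ := by
  set i₀ : Fin n := ⟨0, by omega⟩
  have hF := isHomogeneous_sum_X_sq_pow (σ := Fin n) (R := ℂ) s
  have hF_map : (∑ i : Fin n, X i ^ 2 : MvPolynomial (Fin n) ℂ) ^ s =
      map (Nat.castRingHom ℂ) ((∑ i : Fin n, X i ^ 2) ^ s) := by
    simp
  have hcoeff := one_le_coeff_sum_X_sq_pow (R := ℕ) i₀ s
  have hX : apolar ((X i₀ : MvPolynomial (Fin n) ℂ) ^ (2 * s))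
      ((∑ i : Fin n, X i ^ 2) ^ s) ≠ 0 := by
    rw [apolar_X_pow_of_isHomogeneous hF, Ne, C_eq_zero, hF_map, coeff_map]
    exact mul_ne_zero (Nat.cast_ne_zero.2 (Nat.one_le_iff_ne_zero.1 hcoeff))
      (Nat.cast_ne_zero.2 (Nat.factorial_ne_zero _))
  refine ⟨apolar_eq_zero_of_isHomogeneous_of_lt (isHomogeneous_sum_X_sq_pow (s + 1)) hF
    (by omega), ?_, hX, quotDeg_ne_bot (isHomogeneous_X_pow i₀ _) ?_,
    fun i hi => quotDeg_eq_bot_of_lt hI hF hi⟩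
  · rw [hF_map]
    exact apolar_map_natCast_self_ne_zero (isHomogeneous_sum_X_sq_pow s)
      fun h => by simp [h] at hcoeff
  · rwa [← SetLike.mem_coe, hI]
end

section
/- Let V be a finite-dimensional representation of 𝔰𝔩₂(ℂ) with standard basis X, Y, H ([X,Y]=H, [H,X]=2X, [H,Y]=−2Y). For each integer m let V_m denote the H-eigenspace with eigenvalue m. Then for every integer m ≥ 0, the map Y^m : V_m → V_{−m} is a linear isomorphism. -/
/-
If `H * T - T * H = c • T`, then `T` shifts `H`-eigenspaces by `c`; in finite dimension, for
`c ≠ 0`, this forces `T` to kill every eigenvector after finitely many steps. On a weight vector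
`v ∈ V_μ` one has `X Y^(k+1) v = Y^(k+1) X v + (k+1)(μ-k) Y^k v`. For a primitive vector
(`X v = 0`) of weight `m`, the coefficient is nonzero for `k < m`, so `Y^k v = 0` with `k ≤ m`
forces `v = 0`. A general `v ∈ V_m` is reduced to this case by induction on the nilpotency index
of `X` on `v`: the identity shows that `Y^(k+1)` kills `X v ∈ V_(m+2)`, whence `X v = 0`.
Applying this to the triple `(Y, X, -H)` makes `X^m : V_(-m) → V_m` injective as well, so the two
eigenspaces have equal dimension and the injection `Y^m : V_m → V_(-m)` is onto.
-/

open Module Module.End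

section Weights

variable {K V : Type*} [Field K] [AddCommGroup V] [Module K V] {H T : End K V} {c μ : K} {v : V}

theorem apply_mem_eigenspace_add_of_commutator_eq_smul (h : H * T - T * H = c • T)
    (hv : v ∈ eigenspace H μ) : T v ∈ eigenspace H (μ + c) := by
  rw [mem_eigenspace_iff] at hv ⊢
  have hHT : H (T v) = T (H v) + c • T v := by
    rw [← mul_apply H T, sub_eq_iff_eq_add'.mp h]; rfl
  rw [hHT, hv, map_smul, add_smul]

theorem pow_apply_mem_eigenspace_of_commutator_eq_smul (h : H * T - T * H = c • T)
    (hv : v ∈ eigenspace H μ) (k : ℕ) : (T ^ k) v ∈ eigenspace H (μ + k * c) := by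
  induction k with
  | zero => simpa using hv
  | succ k ih =>
    rw [pow_succ', mul_apply, Nat.cast_succ, add_one_mul, ← add_assoc]
    exact apply_mem_eigenspace_add_of_commutator_eq_smul h ih

theorem exists_pow_apply_eq_zero_of_commutator_eq_smul [CharZero K] [FiniteDimensional K V]
    (hc : c ≠ 0) (h : H * T - T * H = c • T) (hv : v ∈ eigenspace H μ) :
    ∃ k : ℕ, (T ^ k) v = 0 := by
  by_contra! hne
  have hinj : Function.Injective fun k : ℕ ↦ μ + k * c := fun a b hab ↦ by
    simpa [hc] using hab
  have := (H.eigenvectors_linearIndependent' _ hinj (fun k ↦ (T ^ k) v)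
    fun k ↦ ⟨pow_apply_mem_eigenspace_of_commutator_eq_smul h hv k, hne k⟩).finite
  exact not_finite ℕ

theorem eigenspace_neg (f : End K V) (μ : K) : eigenspace (-f) μ = eigenspace f (-μ) := by
  ext v
  simp only [mem_eigenspace_iff, LinearMap.neg_apply, neg_smul, neg_eq_iff_eq_neg]

end Weights

theorem LinearMap.surjective_of_injective_of_injective {K V W : Type*} [Field K]
    [AddCommGroup V] [Module K V] [AddCommGroup W] [Module K W] [FiniteDimensional K V]
    [FiniteDimensional K W] {f : V →ₗ[K] W} {g : W →ₗ[K] V} (hf : Function.Injective f)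
    (hg : Function.Injective g) : Function.Surjective f :=
  (injective_iff_surjective_of_finrank_eq_finrank (le_antisymm
    (finrank_le_finrank_of_injective hf) (finrank_le_finrank_of_injective hg))).mp hf

namespace Sl2Triple

variable {K V : Type*} [Field K] [AddCommGroup V] [Module K V] {X Y H : End K V} {μ : K} {v : V}

theorem raise_pow_apply_mem_eigenspace (hHX : H * X - X * H = 2 • X)
    (hv : v ∈ eigenspace H μ) (k : ℕ) : (X ^ k) v ∈ eigenspace H (μ + 2 * k) := by
  have hHX' : H * X - X * H = (2 : K) • X := by rw [hHX, ofNat_smul_eq_nsmul (R := K)]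
  simpa [mul_comm] using pow_apply_mem_eigenspace_of_commutator_eq_smul hHX' hv k

theorem lower_pow_apply_mem_eigenspace (hHY : H * Y - Y * H = -(2 • Y))
    (hv : v ∈ eigenspace H μ) (k : ℕ) : (Y ^ k) v ∈ eigenspace H (μ - 2 * k) := by
  have hHY' : H * Y - Y * H = (-2 : K) • Y := by
    rw [hHY, neg_smul, ofNat_smul_eq_nsmul (R := K)]
  simpa [sub_eq_add_neg, mul_comm] using pow_apply_mem_eigenspace_of_commutator_eq_smul hHY' hv k

theorem raise_apply_lower_pow_succ (hXY : X * Y - Y * X = H) (hHY : H * Y - Y * H = -(2 • Y))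
    (hv : v ∈ eigenspace H μ) (k : ℕ) :
    X ((Y ^ (k + 1)) v) = (Y ^ (k + 1)) (X v) + ((k + 1) * (μ - k)) • (Y ^ k) v := by
  have hXY_apply : ∀ w, X (Y w) = Y (X w) + H w := fun w ↦ by
    rw [← mul_apply X Y, sub_eq_iff_eq_add'.mp hXY]; rfl
  induction k with
  | zero => simp [hXY_apply, mem_eigenspace_iff.mp hv]
  | succ k ih =>
    rw [pow_succ' Y (k + 1), mul_apply, hXY_apply, ih,
      mem_eigenspace_iff.mp (lower_pow_apply_mem_eigenspace hHY hv (k + 1)), map_add, map_smul,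
      ← mul_apply Y, ← pow_succ', ← mul_apply Y (Y ^ k), ← pow_succ', add_assoc, ← add_smul]
    congr 2
    push_cast
    ring

theorem eq_zero_of_lower_pow_eq_zero_of_raise_eq_zero [CharZero K] (hXY : X * Y - Y * X = H)
    (hHY : H * Y - Y * H = -(2 • Y)) {m k : ℕ} (hk : k ≤ m) (hv : v ∈ eigenspace H m)
    (hXv : X v = 0) (hYv : (Y ^ k) v = 0) : v = 0 := by
  induction k with
  | zero => simpa using hYv
  | succ k ih =>
    refine ih (by omega) ?_
    have hcoeff : ((k + 1) * (m - k) : K) ≠ 0 :=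
      mul_ne_zero (Nat.cast_add_one_ne_zero k) (sub_ne_zero.mpr (by exact_mod_cast (by omega)))
    have := raise_apply_lower_pow_succ hXY hHY hv k
    rw [hYv, hXv, map_zero, map_zero, zero_add, eq_comm, smul_eq_zero] at this
    exact this.resolve_left hcoeff

theorem eq_zero_of_lower_pow_eq_zero [CharZero K] [FiniteDimensional K V]
    (hXY : X * Y - Y * X = H) (hHX : H * X - X * H = 2 • X) (hHY : H * Y - Y * H = -(2 • Y))
    {m k : ℕ} (hk : k ≤ m) (hv : v ∈ eigenspace H m) (hYv : (Y ^ k) v = 0) : v = 0 := by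
  have hHX' : H * X - X * H = (2 : K) • X := by rw [hHX, ofNat_smul_eq_nsmul (R := K)]
  obtain ⟨j, hj⟩ := exists_pow_apply_eq_zero_of_commutator_eq_smul two_ne_zero hHX' hv
  induction j generalizing m k v with
  | zero => simpa using hj
  | succ j ih =>
    have hXv : X v = 0 := by
      refine ih (m := m + 2) (k := k + 1) (by omega) ?_ ?_ ?_
      · exact_mod_cast apply_mem_eigenspace_add_of_commutator_eq_smul hHX' hv
      · have hYv' : (Y ^ (k + 1)) v = 0 := by rw [pow_succ', mul_apply, hYv, map_zero]
        have := raise_apply_lower_pow_succ hXY hHY hv k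
        rwa [hYv', hYv, map_zero, smul_zero, add_zero, eq_comm] at this
      · rwa [← mul_apply, ← pow_succ]
    exact eq_zero_of_lower_pow_eq_zero_of_raise_eq_zero hXY hHY hk hv hXv hYv

theorem eq_zero_of_raise_pow_eq_zero [CharZero K] [FiniteDimensional K V]
    (hXY : X * Y - Y * X = H) (hHX : H * X - X * H = 2 • X) (hHY : H * Y - Y * H = -(2 • Y))
    {m k : ℕ} (hk : k ≤ m) (hv : v ∈ eigenspace H (-m)) (hXv : (X ^ k) v = 0) : v = 0 :=
  eq_zero_of_lower_pow_eq_zero (X := Y) (Y := X) (H := -H) (by rw [← hXY, neg_sub])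
    (by rw [neg_mul, mul_neg, neg_sub_neg, ← neg_sub, hHY, neg_neg])
    (by rw [neg_mul, mul_neg, neg_sub_neg, ← neg_sub, hHX]) hk
    (by rwa [eigenspace_neg]) hXv

end Sl2Triple

theorem stmt6 {V : Type*} [AddCommGroup V] [Module ℂ V] [FiniteDimensional ℂ V]
    (X Y H : Module.End ℂ V)
    (hXY : X * Y - Y * X = H)
    (hHX : H * X - X * H = 2 • X)
    (hHY : H * Y - Y * H = -(2 • Y))
    (m : ℕ) :
    (∀ v ∈ Module.End.eigenspace H (m : ℂ), (Y ^ m) v ∈ Module.End.eigenspace H (-(m : ℂ))) ∧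
    (∀ v ∈ Module.End.eigenspace H (m : ℂ), (Y ^ m) v = 0 → v = 0) ∧
    (∀ w ∈ Module.End.eigenspace H (-(m : ℂ)),
      ∃ v ∈ Module.End.eigenspace H (m : ℂ), (Y ^ m) v = w) := by
  have hY : ∀ v ∈ eigenspace H (m : ℂ), (Y ^ m) v ∈ eigenspace H (-(m : ℂ)) := fun v hv ↦ by
    simpa [two_mul] using Sl2Triple.lower_pow_apply_mem_eigenspace hHY hv m
  have hX : ∀ v ∈ eigenspace H (-(m : ℂ)), (X ^ m) v ∈ eigenspace H (m : ℂ) := fun v hv ↦ by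
    simpa [two_mul] using Sl2Triple.raise_pow_apply_mem_eigenspace hHX hv m
  have hY_inj : ∀ v ∈ eigenspace H (m : ℂ), (Y ^ m) v = 0 → v = 0 := fun v hv ↦
    Sl2Triple.eq_zero_of_lower_pow_eq_zero hXY hHX hHY le_rfl hv
  have hX_inj : ∀ v ∈ eigenspace H (-(m : ℂ)), (X ^ m) v = 0 → v = 0 := fun v hv ↦
    Sl2Triple.eq_zero_of_raise_pow_eq_zero hXY hHX hHY le_rfl hv
  refine ⟨hY, hY_inj, fun w hw ↦ ?_⟩
  obtain ⟨⟨v, hv⟩, hvw⟩ := LinearMap.surjective_of_injective_of_injective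
    ((LinearMap.injective_restrict_iff hY).mpr (Submodule.disjoint_def.mpr hY_inj))
    ((LinearMap.injective_restrict_iff hX).mpr (Submodule.disjoint_def.mpr hX_inj)) ⟨w, hw⟩
  exact ⟨v, hv, congrArg Subtype.val hvw⟩
end

section
/- The algebra A = ℂ[y₁,…,yₙ]/(y₁²,…,yₙ²) has the strong Lefschetz property with Lefschetz element L = y₁ + y₂ + ⋯ + yₙ; that is, for each 0 ≤ i ≤ ⌊n/2⌋ the map ×L^{n−2i}: Aᵢ → A_{n−i} is bijective. -/
open MvPolynomial

/-!
Identify `A` with functions on subsets of the variables: the class of a polynomial is determined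
by its squarefree coefficients, and multiplication by `L` becomes the up operator
`U f S = ∑ j ∈ S, f (S \ {j})` of the boolean lattice. Its adjoint `D` for the standard hermitian
form satisfies `DU - UD = n - 2k` on the level `k`, whence on that level
`D^(m+1) U^(m+1) = D^m U^m (UD + (m+1)(n-2k-m))`. As `UD` is positive semidefinite and these
constants are positive for `m < n - 2k`, `D^m U^m`, hence `U^m`, is injective on level `k` for
`m ≤ n - 2k`. Complementation shows that levels `k` and `n - k` have the same dimension, so
`U^(n-2k)` is bijective between them.
-/

open Finset

lemma Finset.sum_sum_erase_eq_sum_sum_compl {α M : Type*} [Fintype α] [DecidableEq α]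
    [AddCommMonoid M] (F : Finset α → α → M) :
    ∑ S, ∑ j ∈ S, F (S.erase j) j = ∑ T, ∑ j ∈ Tᶜ, F T j := by
  rw [sum_sigma', sum_sigma']
  refine sum_bij' (fun p _ => ⟨p.1.erase p.2, p.2⟩) (fun p _ => ⟨insert p.2 p.1, p.2⟩)
    ?_ ?_ ?_ ?_ (fun _ _ => rfl) <;>
  rintro ⟨S, j⟩ h <;> simp_all

namespace BooleanLattice

variable {α R : Type*} [CommRing R]

def level (k : ℕ) : Submodule R (Finset α → R) where
  carrier := {f | ∀ S, #S ≠ k → f S = 0}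
  add_mem' hf hg S hS := by simp [hf S hS, hg S hS]
  zero_mem' _ _ := rfl
  smul_mem' c f hf S hS := by simp [hf S hS]

variable [DecidableEq α]

def up : (Finset α → R) →ₗ[R] (Finset α → R) where
  toFun f S := ∑ j ∈ S, f (S.erase j)
  map_add' f g := by funext S; simp [sum_add_distrib]
  map_smul' c f := by funext S; simp [mul_sum]

lemma up_apply (f : Finset α → R) (S : Finset α) : up f S = ∑ j ∈ S, f (S.erase j) := rfl

lemma up_mem_level {f : Finset α → R} {k : ℕ} (hf : f ∈ level k) : up f ∈ level (k + 1) := by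
  intro S hS
  refine sum_eq_zero fun j hj => hf _ ?_
  rw [card_erase_of_mem hj]
  have := card_pos.mpr ⟨j, hj⟩
  omega

lemma up_pow_mem_level {f : Finset α → R} {k : ℕ} (hf : f ∈ level k) (m : ℕ) :
    (up ^ m) f ∈ level (k + m) := by
  induction m with
  | zero => simpa using hf
  | succ m ih => rw [pow_succ', Module.End.mul_apply, ← add_assoc]; exact up_mem_level ih

variable [Fintype α]

def down : (Finset α → R) →ₗ[R] (Finset α → R) where
  toFun f S := ∑ j ∈ Sᶜ, f (insert j S)
  map_add' f g := by funext S; simp [sum_add_distrib]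
  map_smul' c f := by funext S; simp [mul_sum]

lemma down_apply (f : Finset α → R) (S : Finset α) : down f S = ∑ j ∈ Sᶜ, f (insert j S) := rfl

lemma dotProduct_up (f g : Finset α → R) : f ⬝ᵥ up g = down f ⬝ᵥ g := by
  simp only [dotProduct, up_apply, down_apply, mul_sum, sum_mul]
  rw [← sum_sum_erase_eq_sum_sum_compl fun T j => f (insert j T) * g T]
  refine sum_congr rfl fun S _ => sum_congr rfl fun j hj => ?_
  rw [insert_erase hj]

lemma star_down [StarRing R] (f : Finset α → R) : star (down f) = down (star f) := by
  funext S
  simp [down_apply]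

lemma down_up_apply (f : Finset α → R) (S : Finset α) :
    down (up f) S = up (down f) S + ((Fintype.card α : R) - 2 * #S) * f S := by
  have hDU : down (up f) S = ∑ j ∈ Sᶜ, (f S + ∑ i ∈ S, f (insert j (S.erase i))) := by
    refine sum_congr rfl fun j hj => ?_
    rw [mem_compl] at hj
    rw [up_apply, sum_insert hj, erase_insert hj]
    congr 1
    refine sum_congr rfl fun i hi => ?_
    rw [erase_insert_of_ne (ne_of_mem_of_not_mem hi hj).symm]
  have hUD : up (down f) S = ∑ i ∈ S, (f S + ∑ j ∈ Sᶜ, f (insert j (S.erase i))) := by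
    refine sum_congr rfl fun i hi => ?_
    rw [down_apply, compl_erase, sum_insert (by simp [hi]), insert_erase hi]
  rw [hDU, hUD, sum_add_distrib, sum_add_distrib, sum_const, sum_const, sum_comm, card_compl,
    nsmul_eq_mul, nsmul_eq_mul, Nat.cast_sub (card_le_univ S)]
  ring

section Commutation

variable {f : Finset α → R} {k : ℕ}

lemma up_down_mem_level (hf : f ∈ level k) : up (down f) ∈ level k := by
  intro S hS
  refine sum_eq_zero fun i hi => sum_eq_zero fun j hj => hf _ ?_
  have hj : j ∉ S.erase i := mem_compl.mp hj
  rw [card_insert_of_notMem hj, card_erase_of_mem hi]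
  have := card_pos.mpr ⟨i, hi⟩
  omega

lemma down_up_of_mem_level (hf : f ∈ level k) :
    down (up f) = up (down f) + ((Fintype.card α : R) - 2 * k) • f := by
  funext S
  rw [Pi.add_apply, Pi.smul_apply, down_up_apply, smul_eq_mul]
  rcases eq_or_ne #S k with h | h
  · rw [h]
  · rw [hf S h, mul_zero, mul_zero]

lemma down_up_pow_succ (hf : f ∈ level k) (m : ℕ) :
    down ((up ^ (m + 1)) f) = (up ^ (m + 1)) (down f)
      + (((m : R) + 1) * ((Fintype.card α : R) - 2 * k - m)) • (up ^ m) f := by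
  induction m with
  | zero => simpa using down_up_of_mem_level hf
  | succ m ih =>
    rw [pow_succ' up (m + 1), Module.End.mul_apply,
      down_up_of_mem_level (up_pow_mem_level hf (m + 1)), ih, map_add, map_smul,
      ← Module.End.mul_apply, ← pow_succ', ← Module.End.mul_apply up (up ^ m), ← pow_succ',
      add_assoc, ← add_smul]
    congr 2
    push_cast
    ring

lemma down_pow_up_pow_succ (hf : f ∈ level k) (m : ℕ) :
    (down ^ (m + 1)) ((up ^ (m + 1)) f)
      = (down ^ m) ((up ^ m) (up (down f)
          + (((m : R) + 1) * ((Fintype.card α : R) - 2 * k - m)) • f)) := by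
  rw [pow_succ down, Module.End.mul_apply, down_up_pow_succ hf, pow_succ up,
    Module.End.mul_apply, map_add (up ^ m), map_smul]

end Commutation

section RCLike

open scoped ComplexOrder

variable {𝕜 : Type*} [RCLike 𝕜] {f : Finset α → 𝕜} {k : ℕ}

lemma eq_zero_of_up_down_add_smul_eq_zero {c : ℕ} (hc : 0 < c)
    (h : up (down f) + (c : 𝕜) • f = 0) : f = 0 := by
  have hsplit : star f ⬝ᵥ (up (down f) + (c : 𝕜) • f)
      = star (down f) ⬝ᵥ down f + (c : 𝕜) * (star f ⬝ᵥ f) := by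
    rw [dotProduct_add, dotProduct_up, star_down, dotProduct_smul, smul_eq_mul]
  rw [h, dotProduct_zero, eq_comm, add_eq_zero_iff_of_nonneg (dotProduct_star_self_nonneg _)
    (mul_nonneg (Nat.cast_nonneg c) (dotProduct_star_self_nonneg f))] at hsplit
  exact dotProduct_star_self_eq_zero.mp
    ((mul_eq_zero.mp hsplit.2).resolve_left (Nat.cast_ne_zero.mpr hc.ne'))

lemma eq_zero_of_down_pow_up_pow_eq_zero {m : ℕ} (hm : 2 * k + m ≤ Fintype.card α)
    (hf : f ∈ level k) (h : (down ^ m) ((up ^ m) f) = 0) : f = 0 := by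
  induction m generalizing f with
  | zero => simpa using h
  | succ m ih =>
    rw [down_pow_up_pow_succ hf] at h
    refine eq_zero_of_up_down_add_smul_eq_zero (c := (m + 1) * (Fintype.card α - 2 * k - m))
      (Nat.mul_pos m.succ_pos (by omega)) ?_
    have hcast : (((m + 1) * (Fintype.card α - 2 * k - m) : ℕ) : 𝕜)
        = ((m : 𝕜) + 1) * ((Fintype.card α : 𝕜) - 2 * k - m) := by
      rw [Nat.cast_mul, Nat.cast_sub (by omega), Nat.cast_sub (by omega)]
      push_cast
      ring
    rw [hcast]
    refine ih (by omega) ?_ h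
    exact add_mem (up_down_mem_level hf) (Submodule.smul_mem _ _ hf)

lemma eq_zero_of_up_pow_eq_zero {m : ℕ} (hm : 2 * k + m ≤ Fintype.card α)
    (hf : f ∈ level k) (h : (up ^ m) f = 0) : f = 0 :=
  eq_zero_of_down_pow_up_pow_eq_zero hm hf (by rw [h, map_zero])

end RCLike

lemma compl_mem_level {f : Finset α → R} {k : ℕ} (hk : k ≤ Fintype.card α)
    (hf : f ∈ level k) : f ∘ compl ∈ level (Fintype.card α - k) := by
  intro S hS
  refine hf Sᶜ ?_
  have := card_le_univ S
  rw [card_compl]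
  omega

lemma finrank_level_eq_finrank_level_card_sub (K : Type*) [Field K] {k : ℕ}
    (hk : k ≤ Fintype.card α) :
    Module.finrank K (level (α := α) (R := K) k)
      = Module.finrank K (level (α := α) (R := K) (Fintype.card α - k)) := by
  let e : (Finset α → K) ≃ₗ[K] (Finset α → K) :=
    LinearEquiv.funCongrLeft K K (Function.Involutive.toPerm compl compl_involutive)
  have hmap {j : ℕ} (hj : j ≤ Fintype.card α) :
      (level j).map e.toLinearMap ≤ level (Fintype.card α - j) := by
    rintro _ ⟨f, hf, rfl⟩
    exact compl_mem_level hj hf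
  refine le_antisymm ?_ ?_
  · rw [← LinearEquiv.finrank_map_eq e]
    exact Submodule.finrank_mono (hmap hk)
  · conv_lhs => rw [← LinearEquiv.finrank_map_eq e]
    conv_rhs => rw [← Nat.sub_sub_self hk]
    exact Submodule.finrank_mono (hmap (Nat.sub_le _ _))

lemma exists_up_pow_eq {𝕜 : Type*} [RCLike 𝕜] {k m : ℕ} (hm : 2 * k + m = Fintype.card α)
    {g : Finset α → 𝕜} (hg : g ∈ level (k + m)) : ∃ f ∈ level k, (up ^ m) f = g := by
  let φ : level (α := α) (R := 𝕜) k →ₗ[𝕜] level (k + m) :=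
    LinearMap.restrict (up ^ m) fun _ hf => up_pow_mem_level hf m
  have hinj : Function.Injective φ := by
    refine (injective_iff_map_eq_zero φ).mpr fun f hf => Subtype.ext ?_
    exact eq_zero_of_up_pow_eq_zero hm.le f.2 (congrArg Subtype.val hf)
  have hrank : Module.finrank 𝕜 (level (α := α) (R := 𝕜) k)
      = Module.finrank 𝕜 (level (α := α) (R := 𝕜) (k + m)) := by
    rw [finrank_level_eq_finrank_level_card_sub 𝕜 (by omega : k ≤ Fintype.card α),
      show Fintype.card α - k = k + m by omega]
  obtain ⟨f, hf⟩ := (LinearMap.injective_iff_surjective_of_finrank_eq_finrank hrank).mp hinj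
    ⟨g, hg⟩
  exact ⟨f, f.2, congrArg Subtype.val hf⟩

end BooleanLattice

namespace MvPolynomial

open Finset BooleanLattice

variable {σ R : Type*} [CommRing R]

noncomputable def squarefreeExponent (S : Finset σ) : σ →₀ ℕ := ∑ j ∈ S, Finsupp.single j 1

lemma degree_squarefreeExponent (S : Finset σ) : (squarefreeExponent S).degree = #S := by
  simp [squarefreeExponent, Finsupp.degree_single]

variable (R) in
noncomputable def squarefreeCoeffs : MvPolynomial σ R →ₗ[R] (Finset σ → R) :=
  LinearMap.pi fun S => lcoeff R (squarefreeExponent S)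

lemma squarefreeCoeffs_apply (p : MvPolynomial σ R) (S : Finset σ) :
    squarefreeCoeffs R p S = coeff (squarefreeExponent S) p := rfl

lemma squarefreeCoeffs_mem_level {p : MvPolynomial σ R} {k : ℕ} (hp : p.IsHomogeneous k) :
    squarefreeCoeffs R p ∈ level k :=
  fun S hS => hp.coeff_eq_zero (by rwa [degree_squarefreeExponent])

variable [DecidableEq σ]

@[simp]
lemma squarefreeExponent_apply (S : Finset σ) (j : σ) :
    squarefreeExponent S j = if j ∈ S then 1 else 0 := by
  simp [squarefreeExponent, Finsupp.finsetSum_apply, Finsupp.single_apply]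

@[simp]
lemma support_squarefreeExponent (S : Finset σ) : (squarefreeExponent S).support = S := by
  ext j
  simp

lemma squarefreeExponent_injective : Function.Injective (squarefreeExponent (σ := σ)) :=
  fun S T h => by rw [← support_squarefreeExponent S, h, support_squarefreeExponent]

lemma squarefreeExponent_support {d : σ →₀ ℕ} (hd : ∀ j, d j ≤ 1) :
    squarefreeExponent d.support = d := by
  ext j
  have := hd j
  simp only [squarefreeExponent_apply, Finsupp.mem_support_iff]
  split_ifs <;> omega

lemma squarefreeExponent_erase {S : Finset σ} {j : σ} (hj : j ∈ S) :
    squarefreeExponent (S.erase j) = squarefreeExponent S - Finsupp.single j 1 := by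
  ext i
  by_cases hi : i = j
  · simp [hi, hj]
  · simp [hi]

lemma mem_span_X_sq_iff {p : MvPolynomial σ R} :
    p ∈ Ideal.span (Set.range fun j => (X j : MvPolynomial σ R) ^ 2)
      ↔ squarefreeCoeffs R p = 0 := by
  have hgen : Set.range (fun j => (X j : MvPolynomial σ R) ^ 2)
      = (fun s => monomial s 1) '' Set.range fun j => Finsupp.single j 2 := by
    rw [← Set.range_comp]
    simp [Function.comp_def, X_pow_eq_monomial]
  rw [hgen, mem_ideal_span_monomial_image]
  constructor
  · intro h
    funext S
    by_contra hne
    obtain ⟨_, ⟨j, rfl⟩, hle⟩ := h _ (mem_support_iff.mpr hne)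
    have := Finsupp.single_le_iff.mp hle
    simp only [squarefreeExponent_apply] at this
    split_ifs at this <;> omega
  · intro h d hd
    by_contra hsq
    have hle : ∀ j, d j ≤ 1 := fun j => by
      by_contra hj
      exact hsq ⟨_, ⟨j, rfl⟩, Finsupp.single_le_iff.mpr (by omega)⟩
    rw [mem_support_iff, ← squarefreeExponent_support hle] at hd
    exact hd (congrFun h d.support)

lemma squarefreeCoeffs_X_mul (j : σ) (p : MvPolynomial σ R) (S : Finset σ) :
    squarefreeCoeffs R (X j * p) S
      = if j ∈ S then squarefreeCoeffs R p (S.erase j) else 0 := by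
  rw [squarefreeCoeffs_apply, coeff_X_mul', support_squarefreeExponent]
  split_ifs with hj
  · rw [squarefreeCoeffs_apply, squarefreeExponent_erase hj]
  · rfl

variable [Fintype σ]

lemma squarefreeCoeffs_sum_X_mul (p : MvPolynomial σ R) :
    squarefreeCoeffs R ((∑ j, X j) * p) = up (squarefreeCoeffs R p) := by
  funext S
  simp only [sum_mul, map_sum, Finset.sum_apply, squarefreeCoeffs_X_mul, sum_ite_mem, univ_inter,
    up_apply]

lemma squarefreeCoeffs_sum_X_pow_mul (m : ℕ) (p : MvPolynomial σ R) :
    squarefreeCoeffs R ((∑ j, X j) ^ m * p) = (up ^ m) (squarefreeCoeffs R p) := by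
  induction m with
  | zero => simp
  | succ m ih =>
    rw [pow_succ', mul_assoc, squarefreeCoeffs_sum_X_mul, ih, pow_succ', Module.End.mul_apply]

lemma exists_isHomogeneous_squarefreeCoeffs_eq {f : Finset σ → R} {k : ℕ} (hf : f ∈ level k) :
    ∃ p : MvPolynomial σ R, p.IsHomogeneous k ∧ squarefreeCoeffs R p = f := by
  refine ⟨∑ S ∈ powersetCard k univ, monomial (squarefreeExponent S) (f S), ?_, ?_⟩
  · refine IsHomogeneous.sum _ _ _ fun S hS => isHomogeneous_monomial _ ?_
    rw [degree_squarefreeExponent, (mem_powersetCard.mp hS).2]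
  · funext S
    simp only [squarefreeCoeffs_apply, coeff_sum, coeff_monomial,
      squarefreeExponent_injective.eq_iff, sum_ite_eq', mem_powersetCard, subset_univ, true_and]
    split_ifs with hS
    · rfl
    · exact (hf S hS).symm

end MvPolynomial

lemma mem_quotDeg_iff {σ : Type*} {I : Ideal (MvPolynomial σ ℂ)} {k : ℕ}
    {x : MvPolynomial σ ℂ ⧸ I} :
    x ∈ quotDeg I k ↔ ∃ p : MvPolynomial σ ℂ, p.IsHomogeneous k ∧ Ideal.Quotient.mk I p = x := by
  simp [quotDeg, mem_homogeneousSubmodule]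

open BooleanLattice in
theorem lefschetzAt_span_X_sq {σ : Type*} [Fintype σ] [DecidableEq σ] {i : ℕ}
    (hi : 2 * i ≤ Fintype.card σ) :
    lefschetzAt (Ideal.span (Set.range fun j : σ => (X j : MvPolynomial σ ℂ) ^ 2))
      (Fintype.card σ) (∑ j, X j) i := by
  set I := Ideal.span (Set.range fun j : σ => (X j : MvPolynomial σ ℂ) ^ 2)
  have hmk (p q : MvPolynomial σ ℂ) :
      Ideal.Quotient.mk I p = Ideal.Quotient.mk I q
        ↔ squarefreeCoeffs ℂ p = squarefreeCoeffs ℂ q := by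
    rw [Ideal.Quotient.mk_eq_mk_iff_sub_mem, mem_span_X_sq_iff, map_sub, sub_eq_zero]
  constructor
  · rintro _ hx hLx
    obtain ⟨p, hp, rfl⟩ := mem_quotDeg_iff.mp hx
    rw [← map_pow, ← map_mul, ← map_zero (Ideal.Quotient.mk I), hmk, map_zero,
      squarefreeCoeffs_sum_X_pow_mul] at hLx
    rw [← map_zero (Ideal.Quotient.mk I), hmk, map_zero]
    exact eq_zero_of_up_pow_eq_zero (by omega) (squarefreeCoeffs_mem_level hp) hLx
  · rintro _ hy
    obtain ⟨q, hq, rfl⟩ := mem_quotDeg_iff.mp hy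
    have hq' : squarefreeCoeffs ℂ q ∈ level (i + (Fintype.card σ - 2 * i)) := by
      rw [show i + (Fintype.card σ - 2 * i) = Fintype.card σ - i by omega]
      exact squarefreeCoeffs_mem_level hq
    obtain ⟨f, hf, hUf⟩ := exists_up_pow_eq (by omega) hq'
    obtain ⟨p, hp, rfl⟩ := exists_isHomogeneous_squarefreeCoeffs_eq hf
    refine ⟨Ideal.Quotient.mk I p, mem_quotDeg_iff.mpr ⟨p, hp, rfl⟩, ?_⟩
    rw [← map_pow, ← map_mul, hmk, squarefreeCoeffs_sum_X_pow_mul, hUf]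

theorem stmt8 (n : ℕ) :
    ∀ i ≤ n / 2,
      lefschetzAt
        (Ideal.span (Set.range fun j : Fin n => (X j : MvPolynomial (Fin n) ℂ) ^ 2))
        n (∑ j, X j) i := by
  intro i hi
  simpa using lefschetzAt_span_X_sq (σ := Fin n) (i := i) (by rw [Fintype.card_fin]; omega)
end

section
/- Let F ∈ ℂ[x₁,…,xₙ] be homogeneous of degree c, A = R/Ann_R(F). For 0 ≤ i ≤ c the bilinear map Aᵢ × A_{c−i} → ℂ given by (P, Q) ↦ (P·Q)(∂)F ∈ ℂ is a perfect pairing; i.e. if P ∈ Rᵢ satisfies (PQ)(∂)F = 0 for all Q ∈ R_{c−i}, then P ∈ Ann_R(F). -/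
open MvPolynomial

section ApolarLemmas

variable {σ : Type*} [DecidableEq σ]

/-- coefficient factor -/
noncomputable def apK (d e : σ →₀ ℕ) : ℂ :=
  ∏ i ∈ d.support ∪ e.support, ((e i).descFactorial (d i) : ℂ)

lemma apK_eq_prod (d e : σ →₀ ℕ) {S : Finset σ} (hS : d.support ⊆ S) :
    apK d e = ∏ i ∈ S, ((e i).descFactorial (d i) : ℂ) := by
  unfold apK
  rw [← Finset.prod_subset Finset.subset_union_left
      (fun x _ hx => by simp [Finsupp.notMem_support_iff.mp hx]),
    Finset.prod_subset hS (fun x _ hx => by simp [Finsupp.notMem_support_iff.mp hx])]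

lemma apolar_eq (P F : MvPolynomial σ ℂ) {s t : Finset (σ →₀ ℕ)}
    (hs : P.support ⊆ s) (ht : F.support ⊆ t) :
    apolar P F = ∑ d ∈ s, ∑ e ∈ t,
      monomial (e - d) (P.coeff d * F.coeff e * apK d e) := by
  rw [apolar]
  rw [Finset.sum_subset hs (fun d _ hd => by
    simp [MvPolynomial.notMem_support_iff.mp hd])]
  exact Finset.sum_congr rfl fun d _ =>
    Finset.sum_subset ht (fun e _ he => by
      simp [MvPolynomial.notMem_support_iff.mp he])

lemma apolar_add_left (P P' F : MvPolynomial σ ℂ) :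
    apolar (P + P') F = apolar P F + apolar P' F := by
  classical
  rw [apolar_eq (P + P') F (s := P.support ∪ P'.support) (t := F.support)
      MvPolynomial.support_add subset_rfl,
    apolar_eq P F (s := P.support ∪ P'.support) (t := F.support)
      Finset.subset_union_left subset_rfl,
    apolar_eq P' F (s := P.support ∪ P'.support) (t := F.support)
      Finset.subset_union_right subset_rfl,
    ← Finset.sum_add_distrib]
  refine Finset.sum_congr rfl fun d _ => ?_
  rw [← Finset.sum_add_distrib]
  refine Finset.sum_congr rfl fun e _ => ?_
  rw [MvPolynomial.coeff_add, add_mul, add_mul, map_add]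

lemma apolar_smul_left (a : ℂ) (P F : MvPolynomial σ ℂ) :
    apolar (a • P) F = a • apolar P F := by
  classical
  rw [apolar_eq (a • P) F (s := P.support) (t := F.support)
      (MvPolynomial.support_smul) subset_rfl,
    apolar_eq P F (s := P.support) (t := F.support) subset_rfl subset_rfl,
    Finset.smul_sum]
  refine Finset.sum_congr rfl fun d _ => ?_
  rw [Finset.smul_sum]
  refine Finset.sum_congr rfl fun e _ => ?_
  rw [MvPolynomial.coeff_smul, smul_eq_mul, MvPolynomial.smul_monomial, smul_eq_mul]
  ring_nf

lemma apolar_add_right (P F F' : MvPolynomial σ ℂ) :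
    apolar P (F + F') = apolar P F + apolar P F' := by
  classical
  rw [apolar_eq P (F + F') (s := P.support) (t := F.support ∪ F'.support)
      subset_rfl MvPolynomial.support_add,
    apolar_eq P F (s := P.support) (t := F.support ∪ F'.support)
      subset_rfl Finset.subset_union_left,
    apolar_eq P F' (s := P.support) (t := F.support ∪ F'.support)
      subset_rfl Finset.subset_union_right,
    ← Finset.sum_add_distrib]
  refine Finset.sum_congr rfl fun d _ => ?_
  rw [← Finset.sum_add_distrib]
  refine Finset.sum_congr rfl fun e _ => ?_
  rw [MvPolynomial.coeff_add, mul_add, add_mul, map_add]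

lemma apolar_smul_right (a : ℂ) (P F : MvPolynomial σ ℂ) :
    apolar P (a • F) = a • apolar P F := by
  classical
  rw [apolar_eq P (a • F) (s := P.support) (t := F.support)
      subset_rfl MvPolynomial.support_smul,
    apolar_eq P F (s := P.support) (t := F.support) subset_rfl subset_rfl,
    Finset.smul_sum]
  refine Finset.sum_congr rfl fun d _ => ?_
  rw [Finset.smul_sum]
  refine Finset.sum_congr rfl fun e _ => ?_
  rw [MvPolynomial.coeff_smul, smul_eq_mul, MvPolynomial.smul_monomial, smul_eq_mul]
  ring_nf

/-- apolar as a bilinear map. -/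
noncomputable def apolarL : MvPolynomial σ ℂ →ₗ[ℂ] MvPolynomial σ ℂ →ₗ[ℂ] MvPolynomial σ ℂ :=
  LinearMap.mk₂ ℂ apolar apolar_add_left apolar_smul_left apolar_add_right apolar_smul_right

lemma apolar_monomial (d e : σ →₀ ℕ) (a b : ℂ) :
    apolar (monomial d a) (monomial e b) = monomial (e - d) (a * b * apK d e) := by
  classical
  by_cases ha : a = 0
  · simp [ha, apolar, MvPolynomial.support_monomial]
  by_cases hb : b = 0
  · simp [hb, apolar, MvPolynomial.support_monomial]
  rw [apolar_eq (monomial d a) (monomial e b) (s := {d}) (t := {e})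
      (by rw [MvPolynomial.support_monomial]; simp [ha])
      (by rw [MvPolynomial.support_monomial]; simp [hb])]
  simp [MvPolynomial.coeff_monomial]

lemma apolar_monomial_assoc (d d' e : σ →₀ ℕ) (a b cc : ℂ) :
    apolar (monomial d a * monomial d' b) (monomial e cc)
      = apolar (monomial d' b) (apolar (monomial d a) (monomial e cc)) := by
  classical
  rw [MvPolynomial.monomial_mul, apolar_monomial, apolar_monomial, apolar_monomial]
  have hexp : e - (d + d') = e - d - d' := by
    ext i; simp [Nat.sub_add_eq]
  rw [hexp]
  congr 1
  set S := (d.support ∪ d'.support) ∪ e.support with hS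
  have h1 : (d + d').support ⊆ S :=
    Finsupp.support_add.trans Finset.subset_union_left
  have h2 : d.support ⊆ S :=
    (Finset.subset_union_left.trans Finset.subset_union_left : d.support ⊆ S)
  have h3 : d'.support ⊆ S :=
    (Finset.subset_union_right.trans Finset.subset_union_left : d'.support ⊆ S)
  rw [apK_eq_prod (d + d') e h1, apK_eq_prod d e h2, apK_eq_prod d' (e - d) h3]
  have key : ∀ i ∈ S, ((e i).descFactorial ((d + d') i) : ℂ)
      = ((e i).descFactorial (d i) : ℂ) * (((e - d) i).descFactorial (d' i) : ℂ) := by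
    intro i _
    rw [Finsupp.add_apply, Finsupp.tsub_apply]
    rw [← Nat.descFactorial_mul_descFactorial (k := d i) (m := d i + d' i) (n := e i)
      (Nat.le_add_right _ _)]
    rw [Nat.add_sub_cancel_left]
    push_cast
    ring
  rw [Finset.prod_congr rfl key, Finset.prod_mul_distrib]
  ring

@[simp] lemma apolarL_apply (P F : MvPolynomial σ ℂ) : apolarL P F = apolar P F := rfl

lemma apolar_mul (P Q F : MvPolynomial σ ℂ) :
    apolar (P * Q) F = apolar Q (apolar P F) := by
  classical
  have lhs : apolar (P * Q) F
      = ∑ e ∈ F.support, ∑ d ∈ P.support, ∑ d' ∈ Q.support,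
          apolar (monomial d (P.coeff d) * monomial d' (Q.coeff d')) (monomial e (F.coeff e)) := by
    conv_lhs => rw [as_sum P, as_sum Q, Finset.sum_mul_sum, as_sum F]
    show apolarL _ _ = _
    simp only [map_sum, LinearMap.sum_apply, apolarL_apply]
  have rhs : apolar Q (apolar P F)
      = ∑ e ∈ F.support, ∑ d ∈ P.support, ∑ d' ∈ Q.support,
          apolar (monomial d' (Q.coeff d'))
            (apolar (monomial d (P.coeff d)) (monomial e (F.coeff e))) := by
    conv_lhs => rw [as_sum Q, as_sum P, as_sum F]
    show apolarL _ (apolarL _ _) = _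
    simp only [map_sum, LinearMap.sum_apply, apolarL_apply]
  rw [lhs, rhs]
  exact Finset.sum_congr rfl fun e _ => Finset.sum_congr rfl fun d _ =>
    Finset.sum_congr rfl fun d' _ => apolar_monomial_assoc _ _ _ _ _ _

lemma Finsupp.degree_add' (u v : σ →₀ ℕ) :
    Finsupp.degree (u + v) = Finsupp.degree u + Finsupp.degree v := by
  rw [Finsupp.degree_eq_weight_one, map_add]

lemma apolar_isHomogeneous {P F : MvPolynomial σ ℂ} {i c : ℕ}
    (hP : P.IsHomogeneous i) (hF : F.IsHomogeneous c) :
    (apolar P F).IsHomogeneous (c - i) := by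
  classical
  rw [apolar_eq P F (s := P.support) (t := F.support) subset_rfl subset_rfl]
  refine IsHomogeneous.sum _ _ _ fun d hd => IsHomogeneous.sum _ _ _ fun e he => ?_
  by_cases ha : P.coeff d * F.coeff e * apK d e = 0
  · rw [ha, map_zero]; exact isHomogeneous_zero _ _ _
  · have hK : apK d e ≠ 0 := fun h => ha (by rw [h, mul_zero])
    have hde : d ≤ e := by
      intro j
      by_cases hj : j ∈ d.support
      · have hj' : j ∈ d.support ∪ e.support := Finset.mem_union_left _ hj
        have := Finset.prod_ne_zero_iff.mp hK j hj'
        rw [Nat.cast_ne_zero, Ne, Nat.descFactorial_eq_zero_iff_lt] at this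
        omega
      · simp [Finsupp.notMem_support_iff.mp hj]
    have hdi : Finsupp.degree d = i := by
      rw [Finsupp.degree_eq_weight_one]
      exact hP (fun h => ha (by rw [h, zero_mul, zero_mul]))
    have hec : Finsupp.degree e = c := by
      rw [Finsupp.degree_eq_weight_one]
      exact hF (fun h => ha (by rw [h, mul_zero, zero_mul]))
    have hsum : (e - d) + d = e := by
      ext j; have := hde j; simp [Finsupp.tsub_apply]; omega
    apply isHomogeneous_monomial
    have := Finsupp.degree_add' (e - d) d
    rw [hsum, hec, hdi] at this
    omega


end ApolarLemmas

theorem stmt12 (n c i : ℕ) (hic : i ≤ c) (F : MvPolynomial (Fin n) ℂ)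
    (hF : F.IsHomogeneous c)
    (P : MvPolynomial (Fin n) ℂ) (hP : P.IsHomogeneous i)
    (h : ∀ Q : MvPolynomial (Fin n) ℂ, Q.IsHomogeneous (c - i) → apolar (P * Q) F = 0) :
    apolar P F = 0 := by
  classical
  set G := apolar P F with hGdef
  have hGhom : G.IsHomogeneous (c - i) := apolar_isHomogeneous hP hF
  set Q : MvPolynomial (Fin n) ℂ :=
    ∑ e ∈ G.support, monomial e (starRingEnd ℂ (G.coeff e)) with hQdef
  have hQhom : Q.IsHomogeneous (c - i) := by
    refine IsHomogeneous.sum _ _ _ fun e he => isHomogeneous_monomial _ ?_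
    rw [Finsupp.degree_eq_weight_one]
    exact hGhom (MvPolynomial.mem_support_iff.mp he)
  have h0 : apolar Q G = 0 := by
    rw [hGdef, ← apolar_mul]; exact h Q hQhom
  have hQcoeff : ∀ d, Q.coeff d = starRingEnd ℂ (G.coeff d) := by
    intro d
    rw [hQdef, MvPolynomial.coeff_sum]
    simp only [MvPolynomial.coeff_monomial]
    rw [Finset.sum_ite_eq' G.support d (fun e => starRingEnd ℂ (G.coeff e))]
    by_cases hd : d ∈ G.support
    · rw [if_pos hd]
    · rw [if_neg hd, MvPolynomial.notMem_support_iff.mp hd, map_zero]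
  have hQsupp : Q.support ⊆ G.support := by
    intro d hd
    rw [MvPolynomial.mem_support_iff, hQcoeff d] at hd
    rw [MvPolynomial.mem_support_iff]
    exact fun hz => hd (by rw [hz, map_zero])
  have hc0 := congrArg (MvPolynomial.coeff 0) h0
  rw [apolar_eq Q G hQsupp subset_rfl] at hc0
  simp only [MvPolynomial.coeff_sum, MvPolynomial.coeff_monomial, MvPolynomial.coeff_zero] at hc0
  have hdiag : ∀ d ∈ G.support,
      (∑ e ∈ G.support, if e - d = 0 then Q.coeff d * G.coeff e * apK d e else 0)
        = Q.coeff d * G.coeff d * apK d d := by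
    intro d hd
    rw [Finset.sum_eq_single_of_mem d hd]
    · simp
    · intro e he hne
      by_cases hed : e - d = 0
      · rw [if_pos hed]
        have hle : ∀ j, e j ≤ d j := by
          intro j
          have := DFunLike.congr_fun hed j
          simp only [Finsupp.tsub_apply, Finsupp.coe_zero, Pi.zero_apply] at this
          omega
        obtain ⟨j, hj⟩ : ∃ j, e j < d j := by
          by_contra hc
          push_neg at hc
          exact hne (Finsupp.ext fun j => le_antisymm (hle j) (hc j))
        have hK : apK d e = 0 := by
          unfold apK
          refine Finset.prod_eq_zero (Finset.mem_union_left _ ?_)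
            (i := j) ?_
          · rw [Finsupp.mem_support_iff]; omega
          · rw [Nat.cast_eq_zero, Nat.descFactorial_eq_zero_iff_lt]; exact hj
        rw [hK, mul_zero]
      · rw [if_neg hed]
  rw [Finset.sum_congr rfl hdiag] at hc0
  -- each diagonal term is a nonnegative real
  have hterm : ∀ d : Fin n →₀ ℕ,
      Q.coeff d * G.coeff d * apK d d
        = ((Complex.normSq (G.coeff d) * ∏ j ∈ d.support, ((d j).factorial : ℝ) : ℝ) : ℂ) := by
    intro d
    rw [hQcoeff d]
    have h1 : apK d d = ((∏ j ∈ d.support, ((d j).factorial : ℝ) : ℝ) : ℂ) := by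
      unfold apK
      rw [Finset.union_self]
      push_cast
      exact Finset.prod_congr rfl fun j _ => by rw [Nat.descFactorial_self]
    rw [h1, ← Complex.normSq_eq_conj_mul_self]
    push_cast
    ring
  rw [Finset.sum_congr rfl (fun d _ => hterm d), ← Complex.ofReal_sum,
    Complex.ofReal_eq_zero] at hc0
  have hall : ∀ d ∈ G.support, Complex.normSq (G.coeff d) * ∏ j ∈ d.support, ((d j).factorial : ℝ) = 0 :=
    (Finset.sum_eq_zero_iff_of_nonneg (fun d _ =>
      mul_nonneg (Complex.normSq_nonneg _)
        (Finset.prod_nonneg fun j _ => by positivity))).mp hc0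
  have : G.support = ∅ := by
    by_contra hne
    obtain ⟨d, hd⟩ := Finset.nonempty_of_ne_empty hne
    have hpos : (0:ℝ) < ∏ j ∈ d.support, ((d j).factorial : ℝ) :=
      Finset.prod_pos fun j _ => by positivity
    have := hall d hd
    have hz : Complex.normSq (G.coeff d) = 0 := by
      rcases mul_eq_zero.mp this with h' | h'
      · exact h'
      · exact absurd h' hpos.ne'
    exact MvPolynomial.mem_support_iff.mp hd (Complex.normSq_eq_zero.mp hz)
  exact MvPolynomial.support_eq_empty.mp this
end
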